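/- Let h ∈ ℂ satisfy e^{-2πih} ≠ e^{2πik/3} for k = 0, 1, 2, and let t ∈ ℂ with |t| < 3. Then Σ_{m=1}^∞ (-1)^m · ( e^{2πim/3} / (e^{-2πih} - e^{2πim/3}) ) · t^m / ( Γ(m) · Γ(1 - m/3)⁴ · Γ(1 + m/3) ) = Σ_{k=1}^{2} ( (-1)^k · e^{2πik/3} / ( (e^{-2πih} - e^{2πik/3}) · Γ(1 - k/3)⁴ ) ) · Σ_{l=0}^∞ (-1)^l · t^{k+3l} · Γ(k/3 + l)⁴ / ( Γ(k/3)⁴ · Γ(k + 3l) · Γ(1 + k/3 + l) ), where all series converge absolutely and the terms on the left with m divisible by 3 vanish because 1/Γ(1 - m/3) = 0 for such m. -/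

import Mathlib

/-!
Write the summation index as `n = m + 1` and split it by its residue mod 3. When `3 ∣ n` the
term vanishes because `1 / Γ(1 - n/3) = 0`. When `n = 3l + k` with `k ∈ {1, 2}`, the coefficient
depends only on `k`, and the reflection formula `Γ(z) Γ(1 - z) = π / sin(πz)`, applied at
`z = k/3 + l`, gives `Γ(1 - k/3 - l)⁴ = Γ(k/3)⁴ Γ(1 - k/3)⁴ / Γ(k/3 + l)⁴`. This turns the
term into the `l`-th term of the `k`-th FJRW series. Consecutive terms of that series have
ratio at most `|t|³/27`, so for `|t| < 3` it converges absolutely.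
-/

open Complex

theorem Complex.Gamma_mul_Gamma_one_sub_add_nat (x : ℂ) (l : ℕ) :
    Gamma (x + l) * Gamma (1 - (x + l)) = (-1) ^ l * (Gamma x * Gamma (1 - x)) := by
  rw [Gamma_mul_Gamma_one_sub, Gamma_mul_Gamma_one_sub, mul_add, mul_comm _ (l : ℂ),
    ← nsmul_eq_mul, sin_antiperiodic.add_nsmul_eq, zsmul_eq_mul]
  push_cast
  rw [div_mul_eq_div_div_swap, div_eq_mul_inv _ ((-1 : ℂ) ^ l), ← inv_pow, inv_neg_one]
  ring

/-- `a n` stands for `e^{2πin/3} / (e^{-2πih} - e^{2πin/3})`; only its 3-periodicity is used. -/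
noncomputable def localITerm (a : ℕ → ℂ) (t : ℂ) (n : ℕ) : ℂ :=
  (-1) ^ n * a n * t ^ n / (Gamma n * Gamma (1 - n / 3) ^ 4 * Gamma (1 + n / 3))

noncomputable def fjrwTerm (t : ℂ) (k l : ℕ) : ℂ :=
  (-1) ^ l * t ^ (k + 3 * l) * Gamma ((k : ℂ) / 3 + l) ^ 4 /
    (Gamma ((k : ℂ) / 3) ^ 4 * Gamma (k + 3 * (l : ℂ)) * Gamma (1 + (k : ℂ) / 3 + l))

theorem localITerm_three_mul_succ (a : ℕ → ℂ) (t : ℂ) (j : ℕ) :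
    localITerm a t (3 * (j + 1)) = 0 := by
  have hpole : 1 - ((3 * (j + 1) : ℕ) : ℂ) / 3 = -j := by push_cast; ring
  rw [localITerm, hpole, Gamma_neg_nat_eq_zero]
  simp

theorem Gamma_natCast_div_three_add_ne_zero {k : ℕ} (hk : 0 < k) (l : ℕ) :
    Gamma ((k : ℂ) / 3 + l) ≠ 0 :=
  Gamma_ne_zero_of_re_pos (by simp; positivity)

theorem localITerm_three_mul_add {a : ℕ → ℂ} (ha : Function.Periodic a 3) (t : ℂ) {k : ℕ}
    (hk₀ : 0 < k) (hk₃ : k < 3) (l : ℕ) :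
    localITerm a t (3 * l + k) = (-1) ^ k * a k / Gamma (1 - k / 3) ^ 4 * fjrwTerm t k l := by
  have hperiod : a (3 * l + k) = a k := by simpa [mul_comm, add_comm] using (ha.nat_mul l) k
  have hΓ₀ : Gamma ((k : ℂ) / 3) ≠ 0 := by simpa using Gamma_natCast_div_three_add_ne_zero hk₀ 0
  have hΓ₁ : Gamma (1 - (k : ℂ) / 3) ≠ 0 :=
    Gamma_ne_zero_of_re_pos (by simpa [div_lt_one] using hk₃)
  have hΓ₂ := Gamma_natCast_div_three_add_ne_zero hk₀ l
  have hrefl := Gamma_mul_Gamma_one_sub_add_nat ((k : ℂ) / 3) l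
  have hrefl₄ : Gamma (1 - (k / 3 + l)) ^ 4 =
      (Gamma ((k : ℂ) / 3) * Gamma (1 - k / 3)) ^ 4 / Gamma (k / 3 + l) ^ 4 := by
    rw [eq_div_iff (pow_ne_zero 4 hΓ₂), ← mul_pow, mul_comm, hrefl, mul_pow, ← pow_mul,
      Even.neg_one_pow ⟨2 * l, by ring⟩, one_mul]
  have hsign : (-1 : ℂ) ^ (3 * l + k) = (-1) ^ k * (-1) ^ l := by
    rw [pow_add, pow_mul, mul_comm]; norm_num
  rw [localITerm, fjrwTerm, hperiod, hsign]
  push_cast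
  rw [show 1 - (3 * (l : ℂ) + k) / 3 = 1 - (k / 3 + l) by ring, hrefl₄,
    show 1 + (3 * (l : ℂ) + k) / 3 = 1 + k / 3 + l by ring, add_comm (3 * (l : ℂ)),
    add_comm (3 * l)]
  field_simp

theorem fjrwTerm_succ (t : ℂ) {k : ℕ} (hk : 0 < k) (l : ℕ) :
    fjrwTerm t k (l + 1) = -t ^ 3 * ((k : ℂ) / 3 + l) ^ 4 / ((3 * (k / 3 + l)) *
      (3 * (k / 3 + l) + 1) * (3 * (k / 3 + l) + 2) * (k / 3 + l + 1)) * fjrwTerm t k l := by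
  have hne {z : ℂ} (hz : 0 < z.re) : z ≠ 0 := fun h => by simp [h] at hz
  have e₁ : Gamma ((k : ℂ) / 3 + (l + 1 : ℕ)) = (k / 3 + l) * Gamma (k / 3 + l) := by
    rw [Nat.cast_succ, ← add_assoc, Gamma_add_one _ (hne (by simp; positivity))]
  have e₂ : Gamma ((k : ℂ) + 3 * (l + 1 : ℕ)) = (3 * (k / 3 + l) + 2) * (3 * (k / 3 + l) + 1) *
      (3 * (k / 3 + l)) * Gamma (k + 3 * l) := by
    rw [show (k : ℂ) + 3 * (l + 1 : ℕ) = 3 * (k / 3 + l) + 2 + 1 by push_cast; ring,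
      Gamma_add_one _ (hne (by simp; positivity)),
      show 3 * ((k : ℂ) / 3 + l) + 2 = 3 * (k / 3 + l) + 1 + 1 by ring,
      Gamma_add_one _ (hne (by simp; positivity)),
      Gamma_add_one _ (hne (by simp; positivity)),
      show 3 * ((k : ℂ) / 3 + l) = k + 3 * l by ring]
    ring
  have e₃ : Gamma (1 + (k : ℂ) / 3 + (l + 1 : ℕ)) = (k / 3 + l + 1) * Gamma (1 + k / 3 + l) := by
    rw [show 1 + (k : ℂ) / 3 + (l + 1 : ℕ) = k / 3 + l + 1 + 1 by push_cast; ring,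
      Gamma_add_one _ (hne (by simp; positivity))]
    ring_nf
  rw [fjrwTerm, fjrwTerm, e₁, e₂, e₃]
  simp only [div_eq_mul_inv, mul_inv, mul_pow]
  ring

theorem pow_four_div_le_one_div_27 (u : ℝ) (hu : 0 < u) :
    u ^ 4 / (3 * u * (3 * u + 1) * (3 * u + 2) * (u + 1)) ≤ 1 / 27 := by
  rw [div_le_div_iff₀ (by positivity) (by norm_num)]
  nlinarith [pow_pos hu 2, pow_pos hu 3]

theorem summable_fjrwTerm {t : ℂ} (ht : ‖t‖ < 3) {k : ℕ} (hk : 0 < k) :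
    Summable (fjrwTerm t k) := by
  refine summable_of_ratio_norm_eventually_le (r := ‖t‖ ^ 3 / 27) ?_ (.of_forall fun l => ?_)
  · rw [div_lt_one (by norm_num)]
    calc ‖t‖ ^ 3 < 3 ^ 3 := by gcongr
      _ = 27 := by norm_num
  · set u : ℝ := k / 3 + l
    have hu : 0 < u := by positivity
    have hratio : -t ^ 3 * ((k : ℂ) / 3 + l) ^ 4 / ((3 * (k / 3 + l)) *
        (3 * (k / 3 + l) + 1) * (3 * (k / 3 + l) + 2) * (k / 3 + l + 1)) =
        -t ^ 3 * ((u ^ 4 / (3 * u * (3 * u + 1) * (3 * u + 2) * (u + 1)) : ℝ) : ℂ) := by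
      push_cast [u]; ring
    rw [fjrwTerm_succ t hk, hratio, norm_mul, norm_mul, norm_neg, norm_pow, Complex.norm_real,
      Real.norm_of_nonneg (by positivity), div_eq_mul_one_div (‖t‖ ^ 3)]
    gcongr ‖t‖ ^ 3 * ?_ * _
    exact pow_four_div_le_one_div_27 u hu

theorem hasSum_of_hasSum_mul_add {M : Type*} [AddCommMonoid M] [TopologicalSpace M]
    [ContinuousAdd M] (N : ℕ) [NeZero N] {f : ℕ → M} {a : Fin N → M}
    (h : ∀ j : Fin N, HasSum (fun l => f (N * l + j)) (a j)) : HasSum f (∑ j, a j) := by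
  have hinj (j : Fin N) : Function.Injective (fun l => N * l + j) := fun l l' hl => by
    simpa [NeZero.ne N] using hl
  have hclass (j : Fin N) :
      HasSum ((Set.range fun l => N * l + (j : ℕ)).indicator f) (a j) :=
    (Function.Injective.hasSum_iff (hinj j) fun n hn => Set.indicator_of_notMem hn f).mp
      (by simpa [Function.comp_def] using h j)
  convert hasSum_sum fun j _ => hclass j with n
  rw [Finset.sum_eq_single (Fin.ofNat N n)]
  · rw [Set.indicator_of_mem]
    exact ⟨n / N, by simp [Nat.div_add_mod n N]⟩
  · rintro j - hj
    refine Set.indicator_of_notMem ?_ f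
    rintro ⟨l, rfl⟩
    exact hj (Fin.ext (by simp [Nat.mod_eq_of_lt j.isLt]))
  · simp

theorem hasSum_localITerm {a : ℕ → ℂ} (ha : Function.Periodic a 3) {t : ℂ} (ht : ‖t‖ < 3) :
    HasSum (fun m => localITerm a t (m + 1)) (∑ k ∈ ({1, 2} : Finset ℕ),
      (-1) ^ k * a k / Gamma (1 - k / 3) ^ 4 * ∑' l, fjrwTerm t k l) := by
  set c : ℕ → ℂ := fun k => (-1) ^ k * a k / Gamma (1 - k / 3) ^ 4 * ∑' l, fjrwTerm t k l
  have hnarrow {k : ℕ} (hk₀ : 0 < k) (hk₃ : k < 3) :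
      HasSum (fun l => localITerm a t (3 * l + k)) (c k) := by
    simp only [localITerm_three_mul_add ha t hk₀ hk₃]
    exact (summable_fjrwTerm ht hk₀).hasSum.mul_left _
  convert hasSum_of_hasSum_mul_add 3 (f := fun m => localITerm a t (m + 1))
    (a := ![c 1, c 2, 0]) fun j => ?_
  · simp [Fin.sum_univ_three, c]
  fin_cases j
  · simpa using hnarrow one_pos (by norm_num)
  · simpa [add_assoc] using hnarrow two_pos (by norm_num)
  · simpa [add_assoc, mul_add] using hasSum_zero.congr_fun fun l => localITerm_three_mul_succ a t l

theorem sector_decomposition_cubic_LG_logCY_general (h t : ℂ)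
    (ht : ‖t‖ < 3) :
    Summable (fun m : ℕ =>
      (-1 : ℂ) ^ (m + 1) *
        (Complex.exp (2 * (Real.pi : ℂ) * Complex.I * ((m : ℂ) + 1) / 3) /
          (Complex.exp (-(2 * (Real.pi : ℂ) * Complex.I * h)) -
            Complex.exp (2 * (Real.pi : ℂ) * Complex.I * ((m : ℂ) + 1) / 3))) *
        t ^ (m + 1) /
        (Complex.Gamma ((m : ℂ) + 1) * Complex.Gamma (1 - ((m : ℂ) + 1) / 3) ^ 4 *
          Complex.Gamma (1 + ((m : ℂ) + 1) / 3))) ∧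
    (∀ k ∈ ({1, 2} : Finset ℕ),
      Summable (fun l : ℕ =>
        (-1 : ℂ) ^ l * t ^ (k + 3 * l) * Complex.Gamma ((k : ℂ) / 3 + (l : ℂ)) ^ 4 /
          (Complex.Gamma ((k : ℂ) / 3) ^ 4 * Complex.Gamma ((k : ℂ) + 3 * (l : ℂ)) *
            Complex.Gamma (1 + (k : ℂ) / 3 + (l : ℂ))))) ∧
    (∑' m : ℕ,
      (-1 : ℂ) ^ (m + 1) *
        (Complex.exp (2 * (Real.pi : ℂ) * Complex.I * ((m : ℂ) + 1) / 3) /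
          (Complex.exp (-(2 * (Real.pi : ℂ) * Complex.I * h)) -
            Complex.exp (2 * (Real.pi : ℂ) * Complex.I * ((m : ℂ) + 1) / 3))) *
        t ^ (m + 1) /
        (Complex.Gamma ((m : ℂ) + 1) * Complex.Gamma (1 - ((m : ℂ) + 1) / 3) ^ 4 *
          Complex.Gamma (1 + ((m : ℂ) + 1) / 3)) =
      ∑ k ∈ ({1, 2} : Finset ℕ),
        ((-1 : ℂ) ^ k * Complex.exp (2 * (Real.pi : ℂ) * Complex.I * (k : ℂ) / 3) /
          ((Complex.exp (-(2 * (Real.pi : ℂ) * Complex.I * h)) -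
              Complex.exp (2 * (Real.pi : ℂ) * Complex.I * (k : ℂ) / 3)) *
            Complex.Gamma (1 - (k : ℂ) / 3) ^ 4)) *
        ∑' l : ℕ,
          (-1 : ℂ) ^ l * t ^ (k + 3 * l) * Complex.Gamma ((k : ℂ) / 3 + (l : ℂ)) ^ 4 /
            (Complex.Gamma ((k : ℂ) / 3) ^ 4 * Complex.Gamma ((k : ℂ) + 3 * (l : ℂ)) *
              Complex.Gamma (1 + (k : ℂ) / 3 + (l : ℂ)))) := by
  have hζ : Function.Periodic (fun n : ℕ => exp (2 * Real.pi * I * n / 3)) 3 := fun n => by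
    simpa [mul_add, add_div, mul_div_assoc] using exp_periodic (2 * Real.pi * I * n / 3)
  have hsum := hasSum_localITerm
    (hζ.comp fun z => z / (exp (-(2 * Real.pi * I * h)) - z)) ht
  simp only [localITerm, Function.comp_apply, Nat.cast_add_one] at hsum
  refine ⟨hsum.summable, fun k hk => summable_fjrwTerm ht ?_, ?_⟩
  · simp only [Finset.mem_insert, Finset.mem_singleton] at hk; omega
  rw [hsum.tsum_eq]
  refine Finset.sum_congr rfl fun k _ => ?_
  congr 1
  simp only [mul_div_assoc, div_div]

/-- For `h : ℂ` with `e^{-2πih} ≠ e^{2πik/3}` for `k = 0, 1, 2`, and `t : ℂ` with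
`|t| < 3`, the series
`Σ_{m≥1} (-1)^m (e^{2πim/3}/(e^{-2πih} - e^{2πim/3})) t^m / (Γ(m) Γ(1-m/3)⁴ Γ(1+m/3))`
equals
`Σ_{k=1,2} ((-1)^k e^{2πik/3} / ((e^{-2πih} - e^{2πik/3}) Γ(1-k/3)⁴)) ·
  Σ_{l≥0} (-1)^l t^{k+3l} Γ(k/3+l)⁴ / (Γ(k/3)⁴ Γ(k+3l) Γ(1+k/3+l))`,
where all series converge absolutely (terms with `3 ∣ m` vanish since `1/Γ(1-m/3) = 0`). -/
theorem sector_decomposition_cubic_LG_logCY (h t : ℂ)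
    (hne : ∀ k : ℕ, k ≤ 2 →
      Complex.exp (-(2 * (Real.pi : ℂ) * Complex.I * h)) ≠
        Complex.exp (2 * (Real.pi : ℂ) * Complex.I * (k : ℂ) / 3))
    (ht : ‖t‖ < 3) :
    Summable (fun m : ℕ =>
      (-1 : ℂ) ^ (m + 1) *
        (Complex.exp (2 * (Real.pi : ℂ) * Complex.I * ((m : ℂ) + 1) / 3) /
          (Complex.exp (-(2 * (Real.pi : ℂ) * Complex.I * h)) -
            Complex.exp (2 * (Real.pi : ℂ) * Complex.I * ((m : ℂ) + 1) / 3))) *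
        t ^ (m + 1) /
        (Complex.Gamma ((m : ℂ) + 1) * Complex.Gamma (1 - ((m : ℂ) + 1) / 3) ^ 4 *
          Complex.Gamma (1 + ((m : ℂ) + 1) / 3))) ∧
    (∀ k ∈ ({1, 2} : Finset ℕ),
      Summable (fun l : ℕ =>
        (-1 : ℂ) ^ l * t ^ (k + 3 * l) * Complex.Gamma ((k : ℂ) / 3 + (l : ℂ)) ^ 4 /
          (Complex.Gamma ((k : ℂ) / 3) ^ 4 * Complex.Gamma ((k : ℂ) + 3 * (l : ℂ)) *
            Complex.Gamma (1 + (k : ℂ) / 3 + (l : ℂ))))) ∧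
    (∑' m : ℕ,
      (-1 : ℂ) ^ (m + 1) *
        (Complex.exp (2 * (Real.pi : ℂ) * Complex.I * ((m : ℂ) + 1) / 3) /
          (Complex.exp (-(2 * (Real.pi : ℂ) * Complex.I * h)) -
            Complex.exp (2 * (Real.pi : ℂ) * Complex.I * ((m : ℂ) + 1) / 3))) *
        t ^ (m + 1) /
        (Complex.Gamma ((m : ℂ) + 1) * Complex.Gamma (1 - ((m : ℂ) + 1) / 3) ^ 4 *
          Complex.Gamma (1 + ((m : ℂ) + 1) / 3)) =
      ∑ k ∈ ({1, 2} : Finset ℕ),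
        ((-1 : ℂ) ^ k * Complex.exp (2 * (Real.pi : ℂ) * Complex.I * (k : ℂ) / 3) /
          ((Complex.exp (-(2 * (Real.pi : ℂ) * Complex.I * h)) -
              Complex.exp (2 * (Real.pi : ℂ) * Complex.I * (k : ℂ) / 3)) *
            Complex.Gamma (1 - (k : ℂ) / 3) ^ 4)) *
        ∑' l : ℕ,
          (-1 : ℂ) ^ l * t ^ (k + 3 * l) * Complex.Gamma ((k : ℂ) / 3 + (l : ℂ)) ^ 4 /
            (Complex.Gamma ((k : ℂ) / 3) ^ 4 * Complex.Gamma ((k : ℂ) + 3 * (l : ℂ)) *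
              Complex.Gamma (1 + (k : ℂ) / 3 + (l : ℂ)))) :=
  sector_decomposition_cubic_LG_logCY_general h t ht
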